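/- arXiv:2307.14080 — 2 statements merged into one kernel-verified Lean document; each statement's English description precedes it below -/
import Mathlib

section
/- Let i > 1 be an integer. Then the double integral ∫₀¹ ∫₀¹ 1/((x₁·x₂)^i + q) dx₂ dx₁ satisfies ∫₀¹ ∫₀¹ 1/((x₁·x₂)^i + q) dx₂ dx₁ = Θ(q^(−1 + 1/i)·(−log q)) as q → 0⁺. -/
/-!
Write `q = tⁱ`. The substitution `u = x y` turns the inner integral into
`x⁻¹ ∫₀ˣ du / (uⁱ + tⁱ)`. For `x ≥ t` this primitive lies between `t / (2 tⁱ)` and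
`i / (i - 1) · t / tⁱ`: the integrand is about `1 / tⁱ` on `[0, t]` and at most `u⁻ⁱ` beyond,
whose tail converges because `i > 1`. Hence on `[t, 1]` the inner integral is comparable to
`t¹⁻ⁱ / x`, which integrates to `t¹⁻ⁱ (-log t) = q^(-1 + 1/i) (-log q) / i`, while on `[0, t]`
it is at most `1 / q` and contributes at most `t / q`, a lower-order term once `-log q ≥ 1`.
-/

open MeasureTheory Filter Topology

/-- `I = Θ(R)` as `q → 0⁺`: there exist constants `0 < c ≤ C` and `q₀ > 0` such that
`c·R q ≤ I q ≤ C·R q` for all `0 < q < q₀`. -/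
def IsThetaAtZero (I R : ℝ → ℝ) : Prop :=
  ∃ c C q₀ : ℝ, 0 < c ∧ c ≤ C ∧ 0 < q₀ ∧
    ∀ q : ℝ, 0 < q → q < q₀ → c * R q ≤ I q ∧ I q ≤ C * R q

open Set Real intervalIntegral

section MonomialIntegrals

variable {i : ℕ}

lemma intervalIntegrable_one_div_mul_pow_add {c q a b : ℝ} (hq : 0 < q) (hc : 0 ≤ c)
    (ha : 0 ≤ a) (hb : 0 ≤ b) :
    IntervalIntegrable (fun u : ℝ => 1 / ((c * u) ^ i + q)) volume a b := by
  refine intervalIntegrable_one_div (fun u hu => ?_) (by fun_prop)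
  have hu : 0 ≤ u := by
    rcases mem_uIcc.mp hu with h | h <;> linarith [h.1]
  positivity

lemma intervalIntegrable_one_div_pow_add {q a b : ℝ} (hq : 0 < q) (ha : 0 ≤ a) (hb : 0 ≤ b) :
    IntervalIntegrable (fun u : ℝ => 1 / (u ^ i + q)) volume a b := by
  simpa using intervalIntegrable_one_div_mul_pow_add (i := i) hq zero_le_one ha hb

lemma integral_one_div_add_le {g : ℝ → ℝ} {a b q : ℝ} (hab : a ≤ b) (hq : 0 < q)
    (hg : ∀ u ∈ Icc a b, 0 ≤ g u)
    (hint : IntervalIntegrable (fun u => 1 / (g u + q)) volume a b) :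
    ∫ u in a..b, 1 / (g u + q) ≤ (b - a) / q := by
  have h := integral_mono_on hab hint intervalIntegrable_const fun u hu =>
    one_div_le_one_div_of_le hq (le_add_of_nonneg_left (hg u hu))
  simpa [div_eq_mul_inv] using h

lemma antitoneOn_integral_one_div_mul_pow_add {q : ℝ} (hq : 0 < q) :
    AntitoneOn (fun x : ℝ => ∫ y in (0 : ℝ)..1, 1 / ((x * y) ^ i + q)) (Ici 0) := by
  intro x hx x' hx' hxx'
  refine integral_mono_on zero_le_one
    (intervalIntegrable_one_div_mul_pow_add hq hx' le_rfl zero_le_one)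
    (intervalIntegrable_one_div_mul_pow_add hq hx le_rfl zero_le_one) fun y hy => ?_
  have hxy : 0 ≤ x * y := mul_nonneg hx hy.1
  gcongr
  exact hy.1

lemma integral_one_div_mul_pow_add {q x : ℝ} (hx : x ≠ 0) :
    ∫ y in (0 : ℝ)..1, 1 / ((x * y) ^ i + q) = x⁻¹ * ∫ u in (0 : ℝ)..x, 1 / (u ^ i + q) := by
  rw [integral_comp_mul_left (fun u => 1 / (u ^ i + q)) hx, mul_zero, mul_one, smul_eq_mul]

variable {t x : ℝ}

lemma div_two_pow_le_integral_one_div_pow_add_pow (ht : 0 < t) (hx : t ≤ x) :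
    t / (2 * t ^ i) ≤ ∫ u in (0 : ℝ)..x, 1 / (u ^ i + t ^ i) := by
  have htpow : 0 < t ^ i := by positivity
  rw [← integral_add_adjacent_intervals (b := t)
    (intervalIntegrable_one_div_pow_add htpow le_rfl ht.le)
    (intervalIntegrable_one_div_pow_add htpow ht.le (ht.le.trans hx))]
  have hhead : t / (2 * t ^ i) ≤ ∫ u in (0 : ℝ)..t, 1 / (u ^ i + t ^ i) := by
    have h := integral_mono_on ht.le intervalIntegrable_const
      (intervalIntegrable_one_div_pow_add htpow le_rfl ht.le) fun u hu =>
        one_div_le_one_div_of_le (by have := hu.1; positivity)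
          (by linarith [pow_le_pow_left₀ hu.1 hu.2 i] : u ^ i + t ^ i ≤ 2 * t ^ i)
    rwa [intervalIntegral.integral_const, smul_eq_mul, sub_zero, mul_one_div] at h
  have htail : 0 ≤ ∫ u in t..x, 1 / (u ^ i + t ^ i) :=
    integral_nonneg hx fun u hu => by have := ht.le.trans hu.1; positivity
  linarith

lemma integral_inv_pow_le (hi : 1 < i) (ht : 0 < t) (hx : t ≤ x) :
    ∫ u in t..x, (u ^ i)⁻¹ ≤ t / ((i - 1) * t ^ i) := by
  have h0 : (0 : ℝ) ∉ uIcc t x := notMem_uIcc_of_lt ht (ht.trans_le hx)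
  have hzpow : ∀ y : ℝ, 0 < y → y ^ (-(i : ℤ) + 1) = y / y ^ i := fun y hy => by
    rw [zpow_add₀ hy.ne', zpow_neg, zpow_natCast, zpow_one, inv_mul_eq_div]
  have hx' : 0 ≤ x / x ^ i := by have := ht.trans_le hx; positivity
  have hi' : (0 : ℝ) < i - 1 := by
    have : (1 : ℝ) < i := by exact_mod_cast hi
    linarith
  rw [show (fun u : ℝ => (u ^ i)⁻¹) = fun u => u ^ (-(i : ℤ)) from
      funext fun u => by rw [zpow_neg, zpow_natCast],
    integral_zpow (Or.inr ⟨by omega, h0⟩), hzpow x (ht.trans_le hx), hzpow t ht,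
    show ((-(i : ℤ) : ℤ) : ℝ) + 1 = -((i : ℝ) - 1) by push_cast; ring,
    div_neg, ← neg_div, neg_sub, div_mul_eq_div_div_swap]
  exact div_le_div_of_nonneg_right (by linarith) hi'.le


lemma integral_one_div_pow_add_pow_le (hi : 1 < i) (ht : 0 < t) (hx : t ≤ x) :
    ∫ u in (0 : ℝ)..x, 1 / (u ^ i + t ^ i) ≤ i / (i - 1) * (t / t ^ i) := by
  have htpow : 0 < t ^ i := by positivity
  have hhead := integral_one_div_add_le ht.le htpow (fun u hu => pow_nonneg hu.1 i)
    (intervalIntegrable_one_div_pow_add htpow le_rfl ht.le)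
  have htail : ∫ u in t..x, 1 / (u ^ i + t ^ i) ≤ ∫ u in t..x, (u ^ i)⁻¹ := by
    refine integral_mono_on hx (intervalIntegrable_one_div_pow_add htpow ht.le (ht.le.trans hx))
      (intervalIntegrable_inv (fun u hu => ?_) (by fun_prop)) fun u hu => ?_
    · exact pow_ne_zero i fun hu0 => notMem_uIcc_of_lt ht (ht.trans_le hx) (hu0 ▸ hu)
    · have : 0 < u ^ i := pow_pos (ht.trans_le hu.1) i
      rw [one_div]
      exact inv_anti₀ this (le_add_of_nonneg_right htpow.le)
  have hi' : (0 : ℝ) < i - 1 := by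
    have : (1 : ℝ) < i := by exact_mod_cast hi
    linarith
  rw [← integral_add_adjacent_intervals (b := t)
    (intervalIntegrable_one_div_pow_add htpow le_rfl ht.le)
    (intervalIntegrable_one_div_pow_add htpow ht.le (ht.le.trans hx))]
  calc _ ≤ (t - 0) / t ^ i + t / ((i - 1) * t ^ i) :=
        add_le_add hhead (htail.trans (integral_inv_pow_le hi ht hx))
    _ = i / (i - 1) * (t / t ^ i) := by
      field_simp
      ring

lemma intervalIntegrable_integral_one_div_mul_pow_add {q a b : ℝ} (hq : 0 < q) (ha : 0 ≤ a)
    (hb : 0 ≤ b) :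
    IntervalIntegrable (fun x => ∫ y in (0 : ℝ)..1, 1 / ((x * y) ^ i + q)) volume a b :=
  ((antitoneOn_integral_one_div_mul_pow_add hq).mono
    fun _ hu => le_trans (le_min ha hb) hu.1).intervalIntegrable

lemma integral_const_mul_inv_eq_mul_neg_log (c : ℝ) (ht : 0 < t) :
    ∫ x in t..1, c * x⁻¹ = c * -log t := by
  rw [intervalIntegral.integral_const_mul, integral_inv_of_pos ht one_pos, one_div, log_inv]

lemma le_integral_integral_one_div_mul_pow_add_pow (ht : 0 < t) (ht1 : t ≤ 1) :
    t / (2 * t ^ i) * -log t ≤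
      ∫ x in (0 : ℝ)..1, ∫ y in (0 : ℝ)..1, 1 / ((x * y) ^ i + t ^ i) := by
  have htpow : 0 < t ^ i := by positivity
  rw [← integral_add_adjacent_intervals (b := t)
    (intervalIntegrable_integral_one_div_mul_pow_add htpow le_rfl ht.le)
    (intervalIntegrable_integral_one_div_mul_pow_add htpow ht.le zero_le_one)]
  have hhead : 0 ≤ ∫ x in (0 : ℝ)..t, ∫ y in (0 : ℝ)..1, 1 / ((x * y) ^ i + t ^ i) :=
    integral_nonneg ht.le fun x hx => integral_nonneg zero_le_one fun y hy => by
      have := mul_nonneg hx.1 hy.1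
      positivity
  have htail : t / (2 * t ^ i) * -log t ≤
      ∫ x in t..1, ∫ y in (0 : ℝ)..1, 1 / ((x * y) ^ i + t ^ i) := by
    rw [← integral_const_mul_inv_eq_mul_neg_log _ ht]
    refine integral_mono_on ht1
      ((intervalIntegrable_inv_iff.2 (Or.inr (notMem_uIcc_of_lt ht one_pos))).const_mul _)
      (intervalIntegrable_integral_one_div_mul_pow_add htpow ht.le zero_le_one) fun x hx => ?_
    have hx0 : 0 < x := ht.trans_le hx.1
    rw [integral_one_div_mul_pow_add hx0.ne', mul_comm]
    exact mul_le_mul_of_nonneg_left (div_two_pow_le_integral_one_div_pow_add_pow ht hx.1)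
      (inv_nonneg.2 hx0.le)
  linarith

lemma integral_integral_one_div_mul_pow_add_pow_le (hi : 1 < i) (ht : 0 < t) (ht1 : t ≤ 1) :
    ∫ x in (0 : ℝ)..1, ∫ y in (0 : ℝ)..1, 1 / ((x * y) ^ i + t ^ i) ≤
      t / t ^ i + i / (i - 1) * (t / t ^ i) * -log t := by
  have htpow : 0 < t ^ i := by positivity
  rw [← integral_add_adjacent_intervals (b := t)
    (intervalIntegrable_integral_one_div_mul_pow_add htpow le_rfl ht.le)
    (intervalIntegrable_integral_one_div_mul_pow_add htpow ht.le zero_le_one)]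
  have hhead : ∫ x in (0 : ℝ)..t, ∫ y in (0 : ℝ)..1, 1 / ((x * y) ^ i + t ^ i) ≤ t / t ^ i := by
    have h := integral_mono_on ht.le
      (intervalIntegrable_integral_one_div_mul_pow_add htpow le_rfl ht.le)
      (intervalIntegrable_const (c := 1 / t ^ i)) fun x hx => by
        simpa using integral_one_div_add_le zero_le_one htpow
          (fun y hy => pow_nonneg (mul_nonneg hx.1 hy.1) i)
          (intervalIntegrable_one_div_mul_pow_add htpow hx.1 le_rfl zero_le_one)
    rwa [intervalIntegral.integral_const, smul_eq_mul, sub_zero, mul_one_div] at h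
  have htail : ∫ x in t..1, ∫ y in (0 : ℝ)..1, 1 / ((x * y) ^ i + t ^ i) ≤
      i / (i - 1) * (t / t ^ i) * -log t := by
    rw [← integral_const_mul_inv_eq_mul_neg_log _ ht]
    refine integral_mono_on ht1
      (intervalIntegrable_integral_one_div_mul_pow_add htpow ht.le zero_le_one)
      ((intervalIntegrable_inv_iff.2 (Or.inr (notMem_uIcc_of_lt ht one_pos))).const_mul _)
      fun x hx => ?_
    have hx0 : 0 < x := ht.trans_le hx.1
    rw [integral_one_div_mul_pow_add hx0.ne', mul_comm]
    exact mul_le_mul_of_nonneg_right (integral_one_div_pow_add_pow_le hi ht hx.1)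
      (inv_nonneg.2 hx0.le)
  linarith

end MonomialIntegrals

lemma rpow_neg_one_add_one_div_mul_neg_log {i : ℕ} {t : ℝ} (hi : i ≠ 0) (ht : 0 < t) :
    (t ^ i) ^ (-1 + 1 / (i : ℝ)) * -log (t ^ i) = i * (t / t ^ i * -log t) := by
  rw [rpow_add (by positivity), rpow_neg_one, one_div, pow_rpow_inv_natCast ht.le hi, log_pow]
  ring

/-- Theorem 4.3, Case 3: for an integer `i > 1`,
`∫₀¹ ∫₀¹ 1/((x₁·x₂)^i + q) dx₂ dx₁ = Θ(q^(−1 + 1/i)·(−log q))` as `q → 0⁺`. -/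
theorem two_dim_monomial_scaling_equal_gt_one (i : ℕ) (hi : 1 < i) :
    IsThetaAtZero
      (fun q : ℝ => ∫ x₁ in (0:ℝ)..1, ∫ x₂ in (0:ℝ)..1, 1 / ((x₁ * x₂) ^ i + q))
      (fun q : ℝ => q ^ (-1 + 1/(i:ℝ)) * (-Real.log q)) := by
  have hi' : (1 : ℝ) < i := by exact_mod_cast hi
  have hi1 : (0 : ℝ) < i - 1 := by linarith
  refine ⟨1 / (2 * i), i / (i - 1), exp (-1), by positivity, ?_, exp_pos _, fun q hq hq₀ => ?_⟩
  · calc 1 / (2 * i) ≤ (1 : ℝ) := by rw [div_le_one (by positivity)]; linarith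
      _ ≤ i / (i - 1) := by rw [le_div_iff₀ hi1]; linarith
  obtain ⟨t, ht, rfl⟩ : ∃ t, 0 < t ∧ t ^ i = q :=
    ⟨q ^ (i : ℝ)⁻¹, by positivity, rpow_inv_natCast_pow hq.le (by omega)⟩
  have hlog : 1 ≤ i * -log t := by
    have := log_lt_log hq hq₀
    rw [log_exp, log_pow] at this
    linarith
  have ht1 : t ≤ 1 := (log_nonpos_iff ht.le).1 (by nlinarith)
  have hB : 0 < t / t ^ i := by positivity
  dsimp only
  rw [rpow_neg_one_add_one_div_mul_neg_log (by omega) ht]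
  constructor
  · calc 1 / (2 * i) * (i * (t / t ^ i * -log t)) = t / (2 * t ^ i) * -log t := by field_simp
      _ ≤ _ := le_integral_integral_one_div_mul_pow_add_pow ht ht1
  · calc _ ≤ t / t ^ i + i / (i - 1) * (t / t ^ i) * -log t :=
          integral_integral_one_div_mul_pow_add_pow_le hi ht ht1
      _ ≤ i / (i - 1) * (i * (t / t ^ i * -log t)) := by
        have : i / (i - 1) * (i * (t / t ^ i * -log t)) =
            i / (i - 1) * (t / t ^ i * -log t) + i * (t / t ^ i * -log t) := by
          field_simp [hi1.ne']
          ring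
        linarith [mul_le_mul_of_nonneg_left hlog hB.le]
end

section
/- The double integral ∫₀¹ ∫₀¹ 1/(x₁·x₂ + q) dx₂ dx₁ satisfies ∫₀¹ ∫₀¹ 1/(x₁·x₂ + q) dx₂ dx₁ = Θ((log q)²) as q → 0⁺. -/
/-!
Integrating out `x₂` turns the double integral into `∫₀¹ log (1 + x/q) / x dx`. On `[q, 1]`
the integrand lies between `(log x - log q) / x` and `(log x - log q + log 2) / x`, whose
primitives are squares of logarithms, each giving `(log q)² / 2` to leading order; on `[0, q]`
it lies between `0` and `1/q`, so that piece contributes at most `1`.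
-/

open MeasureTheory Filter Topology

open Real intervalIntegral Set

lemma integral_one_div_mul_add {a q : ℝ} (ha : 0 < a) (hq : 0 < q) :
    ∫ x in (0:ℝ)..1, 1 / (a * x + q) = log (1 + a / q) / a := by
  rw [integral_comp_mul_add (fun x => 1 / x) ha.ne', mul_zero, zero_add, mul_one,
    integral_one_div_of_pos hq (by positivity), smul_eq_mul, add_div, div_self hq.ne',
    add_comm, inv_mul_eq_div]

lemma intervalIntegrable_log_sub_div {a b : ℝ} (ha : 0 < a) (hb : 0 < b) (c : ℝ) :
    IntervalIntegrable (fun x => (log x - c) / x) volume a b := by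
  have hne : ∀ x ∈ uIcc a b, x ≠ 0 := fun x hx => ((lt_min ha hb).trans_le hx.1).ne'
  exact (((continuousOn_log.mono hne).sub continuousOn_const).div continuousOn_id
    hne).intervalIntegrable

theorem integral_log_sub_div {a b : ℝ} (ha : 0 < a) (hb : 0 < b) (c : ℝ) :
    ∫ x in a..b, (log x - c) / x = ((log b - c) ^ 2 - (log a - c) ^ 2) / 2 := by
  rw [sub_div]
  refine integral_eq_sub_of_hasDerivAt (f := fun x => (log x - c) ^ 2 / 2) (fun x hx => ?_) ?_
  · have hlog := (hasDerivAt_log ((lt_min ha hb).trans_le hx.1).ne').sub_const c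
    exact ((hlog.fun_pow 2).div_const 2).congr_deriv (by push_cast; ring)
  · exact intervalIntegrable_log_sub_div ha hb c

section

variable {q : ℝ}

lemma log_one_add_div_div_nonneg (hq : 0 < q) {x : ℝ} (hx : 0 ≤ x) :
    0 ≤ log (1 + x / q) / x :=
  div_nonneg (log_nonneg (by simp only [le_add_iff_nonneg_right]; positivity)) hx

lemma log_one_add_div_div_le (hq : 0 < q) {x : ℝ} (hx : 0 ≤ x) :
    log (1 + x / q) / x ≤ 1 / q := by
  rcases hx.eq_or_lt with rfl | hx
  · simpa using hq.le
  rw [div_le_iff₀ hx, one_div_mul_eq_div]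
  simpa using log_le_sub_one_of_pos (show 0 < 1 + x / q by positivity)

lemma intervalIntegrable_log_one_add_div_div (hq : 0 < q) {b : ℝ} (hb : 0 ≤ b) :
    IntervalIntegrable (fun x => log (1 + x / q) / x) volume 0 b := by
  rw [intervalIntegrable_iff_integrableOn_Ioc_of_le hb]
  refine Integrable.mono' (g := fun _ => 1 / q) (integrableOn_const measure_Ioc_lt_top.ne)
    (by fun_prop : Measurable fun x => log (1 + x / q) / x).aestronglyMeasurable ?_
  filter_upwards [ae_restrict_mem measurableSet_Ioc] with x hx
  rw [norm_of_nonneg (log_one_add_div_div_nonneg hq hx.1.le)]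
  exact log_one_add_div_div_le hq hx.1.le

lemma integral_integral_one_div_mul_add (hq : 0 < q) :
    ∫ x₁ in (0:ℝ)..1, ∫ x₂ in (0:ℝ)..1, 1 / (x₁ * x₂ + q)
      = ∫ x in (0:ℝ)..1, log (1 + x / q) / x := by
  refine integral_congr_ae (Eventually.of_forall fun x hx => ?_)
  rw [uIoc_of_le zero_le_one] at hx
  exact integral_one_div_mul_add hx.1 hq

lemma sq_log_div_two_le_integral_log_one_add_div_div (hq : 0 < q) (hq1 : q ≤ 1) :
    log q ^ 2 / 2 ≤ ∫ x in (0:ℝ)..1, log (1 + x / q) / x := by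
  have hint := intervalIntegrable_log_one_add_div_div hq zero_le_one
  calc log q ^ 2 / 2 = ∫ x in q..1, (log x - log q) / x := by
        rw [integral_log_sub_div hq one_pos]; simp
    _ ≤ ∫ x in q..1, log (1 + x / q) / x := by
        refine integral_mono_on hq1 (intervalIntegrable_log_sub_div hq one_pos _)
          ((intervalIntegrable_log_one_add_div_div hq hq.le).symm.trans hint) fun x hx => ?_
        have hx0 : 0 < x := hq.trans_le hx.1
        gcongr
        rw [← log_div hx0.ne' hq.ne']
        exact log_le_log (by positivity) (by linarith)
    _ ≤ ∫ x in (0:ℝ)..1, log (1 + x / q) / x :=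
        integral_mono_interval hq.le hq1 le_rfl
          ((ae_restrict_mem measurableSet_Ioc).mono fun x hx =>
            log_one_add_div_div_nonneg hq hx.1.le) hint

lemma integral_log_one_add_div_div_le (hq : 0 < q) (hq1 : q ≤ 1) :
    ∫ x in (0:ℝ)..1, log (1 + x / q) / x ≤ 1 + log q ^ 2 / 2 - log 2 * log q := by
  have hint₀ := intervalIntegrable_log_one_add_div_div hq hq.le
  have hint₁ := hint₀.symm.trans (intervalIntegrable_log_one_add_div_div hq zero_le_one)
  have hnear : ∫ x in (0:ℝ)..q, log (1 + x / q) / x ≤ 1 :=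
    calc ∫ x in (0:ℝ)..q, log (1 + x / q) / x ≤ ∫ x in (0:ℝ)..q, 1 / q :=
          integral_mono_on hq.le hint₀ intervalIntegrable_const fun x hx =>
            log_one_add_div_div_le hq hx.1
      _ = 1 := by simp [hq.ne']
  have hfar : ∫ x in q..1, log (1 + x / q) / x ≤ log q ^ 2 / 2 - log 2 * log q :=
    calc ∫ x in q..1, log (1 + x / q) / x
        ≤ ∫ x in q..1, (log x - (log q - log 2)) / x := by
          refine integral_mono_on hq1 hint₁ (intervalIntegrable_log_sub_div hq one_pos _)
            fun x hx => ?_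
          have hx0 : 0 < x := hq.trans_le hx.1
          gcongr
          rw [sub_sub_eq_add_sub, ← log_mul hx0.ne' two_ne_zero,
            ← log_div (by positivity) hq.ne']
          refine log_le_log (by positivity) ?_
          rw [mul_two, add_div, add_le_add_iff_right, one_le_div hq]
          exact hx.1
      _ = log q ^ 2 / 2 - log 2 * log q := by
          rw [integral_log_sub_div hq one_pos]; simp only [log_one]; ring
  rw [← integral_add_adjacent_intervals hint₀ hint₁]
  linarith

end

/-- Theorem 4.3, Case 4:
`∫₀¹ ∫₀¹ 1/(x₁·x₂ + q) dx₂ dx₁ = Θ((log q)²)` as `q → 0⁺`. -/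
theorem two_dim_monomial_scaling_equal_one :
    IsThetaAtZero
      (fun q : ℝ => ∫ x₁ in (0:ℝ)..1, ∫ x₂ in (0:ℝ)..1, 1 / (x₁ * x₂ + q))
      (fun q : ℝ => (Real.log q) ^ 2) := by
  refine ⟨1 / 2, 3, exp (-1), by norm_num, by norm_num, exp_pos _, fun q hq hq₀ => ?_⟩
  have hlogq : log q < -1 := (log_lt_iff_lt_exp hq).mpr hq₀
  have hq1 : q ≤ 1 := hq₀.le.trans (exp_le_one_iff.mpr (by norm_num))
  have hlog2 : log 2 < 1 := log_two_lt_d9.trans (by norm_num)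
  have hlog2' : 0 < log 2 := log_pos one_lt_two
  dsimp only
  rw [integral_integral_one_div_mul_add hq]
  constructor
  · linarith [sq_log_div_two_le_integral_log_one_add_div_div hq hq1]
  · nlinarith [integral_log_one_add_div_div_le hq hq1]
end
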